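/- Let A be any model of SAPP. Then the relation R₁ is an equivalence relation on A, there are infinitely many R₁-equivalence classes, and every R₁-equivalence class is infinite. -/

import Mathlib

open FirstOrder Language Structure BoundedFormula

/-- The relation symbols of the language `L`: a single binary relation `O`. -/
inductive PerpRel : ℕ → Type
  | o : PerpRel 2

/-- The first-order language with a single binary relation symbol `O`. -/
def L : Language := ⟨fun _ => Empty, PerpRel⟩
  deriving IsRelational

/-- The binary relation symbol `O` of `L`. -/
abbrev oSym : L.Relations 2 := .o

/-- `O(xᵢ, xⱼ)` as a bounded formula. -/
def oBF {n : ℕ} (i j : Fin n) : L.BoundedFormula Empty n :=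
  oSym.boundedFormula₂ (&i) (&j)

/-- Finite conjunction of a list of bounded formulas. -/
def andAll {n : ℕ} : List (L.BoundedFormula Empty n) → L.BoundedFormula Empty n
  | [] => ⊤
  | φ :: l => φ ⊓ andAll l

/-- λ₁ₙ : ∀y₁…∀yₙ∀s(O(s,y₁) ∧ … ∧ O(s,yₙ) → ∃t(t ≠ y₁ ∧ … ∧ t ≠ yₙ ∧ O(s,t))).
Variables: y₁,…,yₙ are de Bruijn indices 0,…,n-1, s is index n, t is index n+1. -/
def lam1 (n : ℕ) : L.Sentence :=
  ((andAll ((List.finRange n).map fun i => oBF (Fin.last n) i.castSucc)).imp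
    ((andAll ((List.finRange n).map fun i =>
        ∼((&(Fin.last (n + 1))) =' (&(i.castSucc.castSucc)))) ⊓
      oBF ((Fin.last n).castSucc) (Fin.last (n + 1))).ex)).alls

/-- λ₂ₙ : ∀y₁…∀yₙ∃s(¬O(s,y₁) ∧ … ∧ ¬O(s,yₙ)).
Variables: y₁,…,yₙ are de Bruijn indices 0,…,n-1, s is index n. -/
def lam2 (n : ℕ) : L.Sentence :=
  ((andAll ((List.finRange n).map fun i => ∼(oBF (Fin.last n) i.castSucc))).ex).alls

/-- λ₃ : ∀x ¬O(x,x). -/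
def lam3 : L.Sentence := (∼(oBF (0 : Fin 1) 0)).alls

/-- λ₄ : ∀x∀y(O(x,y) → O(y,x)). -/
def lam4 : L.Sentence := ((oBF (0 : Fin 2) 1).imp (oBF (1 : Fin 2) 0)).alls

/-- λ₅ : ∀x∃y O(x,y). -/
def lam5 : L.Sentence := ((oBF (0 : Fin 2) 1).ex).alls

/-- λ₆ : ∀x∀y∀z∀t(O(x,z) ∧ O(y,z) ∧ O(x,t) → O(y,t)). -/
def lam6 : L.Sentence :=
  ((oBF (0 : Fin 4) 2 ⊓ oBF (1 : Fin 4) 2 ⊓ oBF (0 : Fin 4) 3).imp (oBF (1 : Fin 4) 3)).alls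

/-- The theory SAPP. -/
def SAPP : L.Theory :=
  {φ | ∃ n, 1 ≤ n ∧ φ = lam1 n} ∪ {φ | ∃ n, 2 ≤ n ∧ φ = lam2 n} ∪ {lam3, lam4, lam5, lam6}

/-- The relation R₁ on a model of SAPP: `x R₁ y` iff for every `z`, `O(x,z)` implies `O(y,z)`. -/
def R1 {M : Type*} [L.Structure M] (x y : M) : Prop :=
  ∀ z : M, RelMap oSym ![x, z] → RelMap oSym ![y, z]

/-!
If two points have a common `O`-neighbour, then by λ₆ every neighbour of one is a neighbour of the
other; together with λ₄ and λ₅ this makes `R₁` symmetric. If the class of `x` were finite, it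
would consist of neighbours of a fixed neighbour `z` of `x`, and λ₁ would give another neighbour
of `z` outside it, which shares `z` with `x` and so lies in the class. If there were only finitely
many classes, choose a neighbour of a representative of each: λ₂ gives a point adjacent to none
of them, although it lies in one of the classes.
-/

namespace SAPP

variable {M : Type*} [L.Structure M]

local notation "O[" x ", " y "]" => RelMap oSym ![x, y]

lemma realize_andAll {n : ℕ} {l : List (L.BoundedFormula Empty n)} {v : Empty → M}
    {xs : Fin n → M} : (andAll l).Realize v xs ↔ ∀ φ ∈ l, φ.Realize v xs := by
  induction l with
  | nil => simp [andAll]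
  | cons φ l ih => simp [andAll, ih]

lemma realize_oBF {n : ℕ} {i j : Fin n} {v : Empty → M} {xs : Fin n → M} :
    (oBF i j).Realize v xs ↔ O[xs i, xs j] := by
  simp [oBF]

variable (h : M ⊨ SAPP)
include h

lemma rel_symm {x y : M} (hxy : O[x, y]) : O[y, x] := by
  have := h.realize_of_mem lam4 (by simp [SAPP])
  simp only [lam4, Sentence.Realize, realize_alls] at this
  simpa [realize_oBF, hxy] using this ![x, y]

lemma exists_rel (x : M) : ∃ y, O[x, y] := by
  have := h.realize_of_mem lam5 (by simp [SAPP])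
  simp only [lam5, Sentence.Realize, realize_alls] at this
  simpa [realize_oBF] using this ![x]

lemma rel_of_rel_of_rel {x y z t : M} (hxz : O[x, z]) (hyz : O[y, z]) (hxt : O[x, t]) :
    O[y, t] := by
  have := h.realize_of_mem lam6 (by simp [SAPP])
  simp only [lam6, Sentence.Realize, realize_alls] at this
  simpa [realize_oBF, hxz, hyz, hxt] using this ![x, y, z, t]

lemma exists_forall_not_rel_of_two_le {n : ℕ} (hn : 2 ≤ n) (y : Fin n → M) :
    ∃ s, ∀ i, ¬ O[s, y i] := by
  have := h.realize_of_mem (lam2 n) (.inl (.inr ⟨n, hn, rfl⟩))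
  simp only [lam2, Sentence.Realize, realize_alls] at this
  simpa [realize_andAll, realize_oBF] using this y

lemma exists_rel_forall_ne_of_one_le {n : ℕ} (hn : 1 ≤ n) (y : Fin n → M) {s : M}
    (hs : ∀ i, O[s, y i]) : ∃ t, (∀ i, t ≠ y i) ∧ O[s, t] := by
  have := h.realize_of_mem (lam1 n) (.inl (.inl ⟨n, hn, rfl⟩))
  simp only [lam1, Sentence.Realize, realize_alls] at this
  simpa [realize_andAll, realize_oBF, hs] using this (Fin.snoc y s)

lemma exists_forall_not_rel [Nonempty M] {S : Set M} (hS : S.Finite) :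
    ∃ s, ∀ y ∈ S, ¬ O[s, y] := by
  obtain ⟨n, f, rfl⟩ := hS.fin_embedding
  let a : M := Classical.arbitrary M
  obtain ⟨s, hs⟩ := exists_forall_not_rel_of_two_le h (by omega) (Fin.cons a (Fin.cons a f))
  exact ⟨s, by simpa using fun i : Fin n => hs i.succ.succ⟩

lemma exists_rel_notMem {S : Set M} (hS : S.Finite) {s : M} (hs : ∀ y ∈ S, O[s, y]) :
    ∃ t ∉ S, O[s, t] := by
  obtain ⟨n, f, rfl⟩ := hS.fin_embedding
  obtain ⟨a, ha⟩ := exists_rel h s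
  obtain ⟨t, ht, hst⟩ := exists_rel_forall_ne_of_one_le h (by omega) (Fin.cons a f)
    (Fin.cases ha fun i => by simpa using hs (f i) ⟨i, rfl⟩)
  exact ⟨t, by simpa using fun i : Fin n => (ht i.succ).symm, hst⟩

omit h in
lemma R1_refl (x : M) : R1 x x := fun _ => id

omit h in
lemma R1_trans {x y z : M} (hxy : R1 x y) (hyz : R1 y z) : R1 x z := fun w hw => hyz w (hxy w hw)

lemma R1_of_rel_of_rel {x y z : M} (hxz : O[x, z]) (hyz : O[y, z]) : R1 x y :=
  fun _ => rel_of_rel_of_rel h hxz hyz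

lemma R1_symm {x y : M} (hxy : R1 x y) : R1 y x := by
  obtain ⟨z, hxz⟩ := exists_rel h x
  exact R1_of_rel_of_rel h (hxy z hxz) hxz

lemma R1_equivalence : Equivalence (R1 (M := M)) :=
  ⟨R1_refl, R1_symm h, R1_trans⟩

lemma infinite_setOf_R1 (x : M) : {y | R1 x y}.Infinite := by
  intro hfin
  obtain ⟨z, hxz⟩ := exists_rel h x
  obtain ⟨t, ht, hzt⟩ := exists_rel_notMem h hfin fun y hy => rel_symm h (hy z hxz)
  exact ht (R1_of_rel_of_rel h hxz (rel_symm h hzt))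

lemma infinite_R1_classes [Nonempty M] :
    {s : Set M | ∃ x : M, s = {y : M | R1 x y}}.Infinite := by
  intro hfin
  choose nbr hnbr using exists_rel h
  let cls : M → Set M := fun x => {y | R1 x y}
  obtain ⟨s, hs⟩ := exists_forall_not_rel h (hfin.image (nbr ∘ Function.invFun cls))
  have hs_mem : s ∈ cls (Function.invFun cls (cls s)) := by
    rw [Function.invFun_eq (f := cls) ⟨s, rfl⟩]
    exact R1_refl s
  exact hs _ ⟨cls s, ⟨s, rfl⟩, rfl⟩ (hs_mem _ (hnbr _))

end SAPP

/-- in any model of SAPP, R₁ is an equivalence relation, there are infinitely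
many R₁-equivalence classes, and every R₁-equivalence class is infinite. -/
theorem statement_2 (M : Type*) [L.Structure M] [Nonempty M] (h : M ⊨ SAPP) :
    Equivalence (R1 (M := M)) ∧
      {s : Set M | ∃ x : M, s = {y : M | R1 x y}}.Infinite ∧
      (∀ x : M, {y : M | R1 x y}.Infinite) :=
  ⟨SAPP.R1_equivalence h, SAPP.infinite_R1_classes h, SAPP.infinite_setOf_R1 h⟩
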